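/- For one-dimensional probability measures, W_{1,1}(μ,ν) = ∫_R |F_μ(x) − F_ν(x)| dx, i.e., the 1-Wasserstein distance equals the L^1 distance between the CDFs. -/
import Mathlib


open MeasureTheory ProbabilityTheory

/-- Optimal transport cost between two measures for a given cost function. -/
noncomputable def Wcost {α : Type*} [MeasurableSpace α] (cost : α → α → ℝ)
    (μ ν : Measure α) : ℝ :=
  sInf {r : ℝ | ∃ π : Measure (α × α),
    π.map Prod.fst = μ ∧ π.map Prod.snd = ν ∧ r = ∫ z, cost z.1 z.2 ∂π}

/-- The Wasserstein distance `W_{q,p}` on measures on `ℝ^d` with ground metric `ℓ_p`. -/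
noncomputable def Wqp (q p : ℝ) {d : ℕ} (μ ν : Measure (Fin d → ℝ)) : ℝ :=
  (Wcost (fun u v => (∑ i, |u i - v i| ^ p) ^ (q / p)) μ ν) ^ (1 / q)

/-- Quantile function (generalized inverse of the CDF). -/
noncomputable def quantile (μ : Measure ℝ) (t : ℝ) : ℝ :=
  sInf {u : ℝ | t ≤ cdf μ u}

section Aux

open Set Filter
open scoped ENNReal

set_option linter.unusedSectionVars false

variable {μ ν : Measure ℝ} [IsProbabilityMeasure μ] [IsProbabilityMeasure ν]

lemma qset_nonempty {t : ℝ} (ht : t < 1) : {u : ℝ | t ≤ cdf μ u}.Nonempty := by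
  have h := (tendsto_cdf_atTop μ).eventually (eventually_ge_nhds ht)
  exact h.exists

lemma qset_bddBelow {t : ℝ} (ht : 0 < t) : BddBelow {u : ℝ | t ≤ cdf μ u} := by
  have h := (tendsto_cdf_atBot μ).eventually (eventually_lt_nhds ht)
  obtain ⟨z, hz⟩ := h.exists_forall_of_atBot
  exact ⟨z, fun y hy => le_of_not_gt fun hyz => absurd hy (not_le.2 (hz y hyz.le))⟩

lemma quantile_le_iff {t x : ℝ} (ht0 : 0 < t) (ht1 : t < 1) :
    quantile μ t ≤ x ↔ t ≤ cdf μ x := by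
  constructor
  · intro h
    have key : ∀ y, quantile μ t < y → t ≤ cdf μ y := by
      intro y hy
      obtain ⟨s, hs, hsy⟩ := exists_lt_of_csInf_lt (qset_nonempty ht1) hy
      exact hs.trans (monotone_cdf μ hsy.le)
    have h2 : t ≤ cdf μ (quantile μ t) := by
      have rc : Filter.Tendsto (cdf μ) (nhdsWithin (quantile μ t) (Ioi (quantile μ t)))
          (nhds (cdf μ (quantile μ t))) :=
        ((cdf μ).right_continuous _).mono_left (nhdsWithin_mono _ Ioi_subset_Ici_self)
      refine ge_of_tendsto rc ?_
      filter_upwards [self_mem_nhdsWithin] with y hy using key y hy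
    exact h2.trans (monotone_cdf μ h)
  · intro h
    exact csInf_le (qset_bddBelow ht0) h

lemma quantile_monotoneOn : MonotoneOn (quantile μ) (Ioo (0:ℝ) 1) := by
  intro a ha b hb hab
  exact csInf_le_csInf (qset_bddBelow ha.1) (qset_nonempty hb.2)
    (fun u hu => le_trans hab hu)

lemma quantile_aemeasurable :
    AEMeasurable (quantile μ) (volume.restrict (Ioo (0:ℝ) 1)) :=
  aemeasurable_restrict_of_monotoneOn measurableSet_Ioo quantile_monotoneOn

instance : IsProbabilityMeasure (volume.restrict (Ioo (0:ℝ) 1)) := by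
  constructor
  rw [Measure.restrict_apply MeasurableSet.univ, univ_inter, Real.volume_Ioo]
  norm_num

lemma map_quantile : (volume.restrict (Ioo (0:ℝ) 1)).map (quantile μ) = μ := by
  refine Measure.ext_of_Iic _ _ (fun x => ?_)
  rw [Measure.map_apply_of_aemeasurable quantile_aemeasurable measurableSet_Iic,
    Measure.restrict_apply' measurableSet_Ioo]
  have hset : quantile μ ⁻¹' Iic x ∩ Ioo 0 1 = Iic (cdf μ x) ∩ Ioo (0:ℝ) 1 := by
    ext u
    simp only [mem_inter_iff, mem_preimage, mem_Iic, mem_Ioo, and_congr_left_iff]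
    intro hu
    exact quantile_le_iff hu.1 hu.2
  rw [hset, ← ofReal_cdf μ x]
  have h0 : 0 ≤ cdf μ x := cdf_nonneg μ x
  rcases lt_or_ge (cdf μ x) 1 with h1 | h1
  · have : Iic (cdf μ x) ∩ Ioo (0:ℝ) 1 = Ioc 0 (cdf μ x) := by
      ext u; simp only [mem_inter_iff, mem_Iic, mem_Ioo, mem_Ioc]
      constructor
      · rintro ⟨h, h2, h3⟩; exact ⟨h2, h⟩
      · rintro ⟨h2, h⟩; exact ⟨h, h2, lt_of_le_of_lt h h1⟩
    rw [this, Real.volume_Ioc, sub_zero]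
  · have hx1 : cdf μ x = 1 := le_antisymm (cdf_le_one μ x) h1
    have : Iic (cdf μ x) ∩ Ioo (0:ℝ) 1 = Ioo 0 1 := by
      rw [hx1]
      ext u; simp only [mem_inter_iff, mem_Iic, mem_Ioo]
      exact ⟨fun h => h.2, fun h => ⟨h.2.le, h⟩⟩
    rw [this, Real.volume_Ioo, hx1, sub_zero]

lemma mem_strip_iff {s t x : ℝ} :
    (min s t ≤ x ∧ x < max s t) ↔ Xor' (s ≤ x) (t ≤ x) := by
  rcases le_total s t with h | h
  · rw [min_eq_left h, max_eq_right h, Xor']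
    constructor
    · rintro ⟨h1, h2⟩; left; exact ⟨h1, not_le.2 h2⟩
    · rintro (⟨h1, h2⟩ | ⟨h1, h2⟩)
      · exact ⟨h1, lt_of_not_ge h2⟩
      · exact absurd (h.trans h1) h2
  · rw [min_eq_right h, max_eq_left h, Xor']
    constructor
    · rintro ⟨h1, h2⟩; right; exact ⟨h1, not_le.2 h2⟩
    · rintro (⟨h1, h2⟩ | ⟨h1, h2⟩)
      · exact absurd (h.trans h1) h2
      · exact ⟨h1, lt_of_not_ge h2⟩

lemma xor_le_iff {a b u : ℝ} :
    Xor' (u ≤ a) (u ≤ b) ↔ (min a b < u ∧ u ≤ max a b) := by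
  rcases le_total a b with h | h
  · rw [min_eq_left h, max_eq_right h, Xor']
    constructor
    · rintro (⟨h1, h2⟩ | ⟨h1, h2⟩)
      · exact absurd (h1.trans h) h2
      · exact ⟨lt_of_not_ge h2, h1⟩
    · rintro ⟨h1, h2⟩; right; exact ⟨h2, not_le.2 h1⟩
  · rw [min_eq_right h, max_eq_left h, Xor']
    constructor
    · rintro (⟨h1, h2⟩ | ⟨h1, h2⟩)
      · exact ⟨lt_of_not_ge h2, h1⟩
      · exact absurd (h1.trans h) h2
    · rintro ⟨h1, h2⟩; left; exact ⟨h2, not_le.2 h1⟩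

lemma strip_measurableSet :
    MeasurableSet {p : (ℝ × ℝ) × ℝ | min p.1.1 p.1.2 ≤ p.2 ∧ p.2 < max p.1.1 p.1.2} := by
  apply MeasurableSet.inter
  · exact measurableSet_le (by fun_prop) measurable_snd
  · exact measurableSet_lt measurable_snd (by fun_prop)

lemma strip2_measurableSet (x : ℝ) :
    MeasurableSet {z : ℝ × ℝ | min z.1 z.2 ≤ x ∧ x < max z.1 z.2} :=
  (measurableSet_le (measurable_fst.min measurable_snd) measurable_const).inter
    (measurableSet_lt measurable_const (measurable_fst.max measurable_snd))

lemma key_fubini (π : Measure (ℝ × ℝ)) [SFinite π] :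
    ∫⁻ z, ENNReal.ofReal |z.1 - z.2| ∂π
      = ∫⁻ x, π {z : ℝ × ℝ | min z.1 z.2 ≤ x ∧ x < max z.1 z.2} := by
  set S : Set ((ℝ × ℝ) × ℝ) := {p | min p.1.1 p.1.2 ≤ p.2 ∧ p.2 < max p.1.1 p.1.2} with hS
  have hSm := strip_measurableSet
  have step1 : ∫⁻ z, ENNReal.ofReal |z.1 - z.2| ∂π
      = ∫⁻ z, (∫⁻ x, S.indicator 1 (z, x)) ∂π := by
    refine lintegral_congr fun z => ?_
    have h1 : ∀ x, S.indicator (1 : ((ℝ×ℝ)×ℝ) → ℝ≥0∞) (z, x)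
        = (Ico (min z.1 z.2) (max z.1 z.2)).indicator 1 x := by
      intro x
      simp only [Set.indicator_apply, hS, mem_setOf_eq, mem_Ico, Pi.one_apply]
    simp_rw [h1]
    rw [lintegral_indicator measurableSet_Ico]
    simp only [Pi.one_apply]
    rw [setLIntegral_one, Real.volume_Ico, max_sub_min_eq_abs, abs_sub_comm]
  have hswap : AEMeasurable
      (Function.uncurry fun (z : ℝ × ℝ) (x : ℝ) => S.indicator (1 : ((ℝ×ℝ)×ℝ) → ℝ≥0∞) (z, x))
      (π.prod volume) := by
    have hm : Measurable (S.indicator (1 : ((ℝ×ℝ)×ℝ) → ℝ≥0∞)) := measurable_one.indicator hSm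
    exact hm.aemeasurable
  rw [step1, lintegral_lintegral_swap hswap]
  refine lintegral_congr fun x => ?_
  have h2 : ∀ z : ℝ × ℝ, S.indicator (1 : ((ℝ×ℝ)×ℝ) → ℝ≥0∞) (z, x)
      = ({z : ℝ × ℝ | min z.1 z.2 ≤ x ∧ x < max z.1 z.2}).indicator 1 z := by
    intro z
    simp only [Set.indicator_apply, hS, mem_setOf_eq, Pi.one_apply]
  simp_rw [h2]
  rw [lintegral_indicator (strip2_measurableSet x)]
  simp only [Pi.one_apply]
  rw [setLIntegral_one]

lemma coupling_isProb (π : Measure (ℝ × ℝ)) (h1 : π.map Prod.fst = μ) :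
    IsProbabilityMeasure π := by
  constructor
  have h : π.map Prod.fst Set.univ = 1 := by rw [h1]; exact measure_univ
  rwa [Measure.map_apply measurable_fst MeasurableSet.univ, preimage_univ] at h

lemma lower_bound (π : Measure (ℝ × ℝ)) [IsProbabilityMeasure π]
    (h1 : π.map Prod.fst = μ) (h2 : π.map Prod.snd = ν) :
    ∫⁻ x, ENNReal.ofReal |cdf μ x - cdf ν x|
      ≤ ∫⁻ z, ENNReal.ofReal |z.1 - z.2| ∂π := by
  rw [key_fubini]
  refine lintegral_mono fun x => ?_
  set Δ := {z : ℝ × ℝ | min z.1 z.2 ≤ x ∧ x < max z.1 z.2} with hΔ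
  have hA : π {z : ℝ × ℝ | z.1 ≤ x} = ENNReal.ofReal (cdf μ x) := by
    rw [ofReal_cdf, ← h1, Measure.map_apply measurable_fst measurableSet_Iic]; rfl
  have hB : π {z : ℝ × ℝ | z.2 ≤ x} = ENNReal.ofReal (cdf ν x) := by
    rw [ofReal_cdf, ← h2, Measure.map_apply measurable_snd measurableSet_Iic]; rfl
  have hsub1 : {z : ℝ × ℝ | z.1 ≤ x} ⊆ Δ ∪ {z : ℝ × ℝ | z.2 ≤ x} := by
    intro z hz
    by_cases h : z.2 ≤ x
    · exact Or.inr h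
    · exact Or.inl ⟨min_le_of_left_le hz, lt_of_not_ge fun hx => h ((le_max_right z.1 z.2).trans hx)⟩
  have hsub2 : {z : ℝ × ℝ | z.2 ≤ x} ⊆ Δ ∪ {z : ℝ × ℝ | z.1 ≤ x} := by
    intro z hz
    by_cases h : z.1 ≤ x
    · exact Or.inr h
    · exact Or.inl ⟨min_le_of_right_le hz, lt_of_not_ge fun hx => h ((le_max_left _ _).trans hx)⟩
  have key : ∀ C D : Set (ℝ × ℝ), C ⊆ Δ ∪ D → π C - π D ≤ π Δ := by
    intro C D hCD
    rw [tsub_le_iff_right]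
    exact le_trans (measure_mono hCD) (measure_union_le _ _)
  rcases abs_cases (cdf μ x - cdf ν x) with ⟨heq, hsign⟩ | ⟨heq, hsign⟩
  · rw [heq, ENNReal.ofReal_sub _ (cdf_nonneg ν x), ← hA, ← hB]
    exact key _ _ hsub1
  · rw [heq, neg_sub, ENNReal.ofReal_sub _ (cdf_nonneg μ x), ← hA, ← hB]
    exact key _ _ hsub2

lemma value_monotone_coupling :
    ∫⁻ z, ENNReal.ofReal |z.1 - z.2|
        ∂((volume.restrict (Ioo (0:ℝ) 1)).map (fun u => (quantile μ u, quantile ν u)))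
      = ∫⁻ x, ENNReal.ofReal |cdf μ x - cdf ν x| := by
  set P := volume.restrict (Ioo (0:ℝ) 1) with hPdef
  have hpair : AEMeasurable (fun u => (quantile μ u, quantile ν u)) P :=
    AEMeasurable.prodMk quantile_aemeasurable quantile_aemeasurable
  haveI : IsProbabilityMeasure (P.map (fun u => (quantile μ u, quantile ν u))) :=
    Measure.isProbabilityMeasure_map hpair
  rw [key_fubini]
  refine lintegral_congr fun x => ?_
  rw [Measure.map_apply_of_aemeasurable hpair (strip2_measurableSet x), hPdef,
    Measure.restrict_apply' measurableSet_Ioo]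
  set m := min (cdf μ x) (cdf ν x) with hm
  set M := max (cdf μ x) (cdf ν x) with hM
  have hm0 : 0 ≤ m := le_min (cdf_nonneg μ x) (cdf_nonneg ν x)
  have hM1 : M ≤ 1 := max_le (cdf_le_one μ x) (cdf_le_one ν x)
  have hset : (fun u => (quantile μ u, quantile ν u)) ⁻¹' {z : ℝ × ℝ | min z.1 z.2 ≤ x ∧ x < max z.1 z.2}
      ∩ Ioo 0 1 = Ioc m M ∩ Ioo (0:ℝ) 1 := by
    ext u
    simp only [mem_inter_iff, mem_preimage, mem_setOf_eq, mem_Ioc, mem_Ioo, and_congr_left_iff]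
    intro hu
    rw [mem_strip_iff]
    have e1 : quantile μ u ≤ x ↔ u ≤ cdf μ x := quantile_le_iff hu.1 hu.2
    have e2 : quantile ν u ≤ x ↔ u ≤ cdf ν x := quantile_le_iff hu.1 hu.2
    have e3 : Xor' (quantile μ u ≤ x) (quantile ν u ≤ x)
        ↔ Xor' (u ≤ cdf μ x) (u ≤ cdf ν x) := by unfold Xor'; rw [e1, e2]
    rw [e3, xor_le_iff]
  rw [hset]
  have habs : M - m = |cdf μ x - cdf ν x| := (max_sub_min_eq_abs _ _).trans (abs_sub_comm _ _)
  rcases lt_or_ge M 1 with h1 | h1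
  · have : Ioc m M ∩ Ioo (0:ℝ) 1 = Ioc m M := by
      refine inter_eq_left.2 fun u hu => ?_
      exact ⟨lt_of_le_of_lt hm0 hu.1, lt_of_le_of_lt hu.2 h1⟩
    rw [this, Real.volume_Ioc, habs]
  · have hM' : M = 1 := le_antisymm hM1 h1
    have : Ioc m M ∩ Ioo (0:ℝ) 1 = Ioo m 1 := by
      ext u
      simp only [mem_inter_iff, mem_Ioc, mem_Ioo, hM']
      constructor
      · rintro ⟨⟨h2, h3⟩, h4, h5⟩; exact ⟨h2, h5⟩
      · rintro ⟨h2, h3⟩; exact ⟨⟨h2, h3.le⟩, lt_of_le_of_lt hm0 h2, h3⟩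
    rw [this, Real.volume_Ioo, ← hM', habs]

lemma lintegral_fst_abs (π : Measure (ℝ × ℝ)) (h1 : π.map Prod.fst = μ) :
    ∫⁻ z, ENNReal.ofReal |z.1| ∂π = ∫⁻ t, ENNReal.ofReal |t| ∂μ := by
  have hf : Measurable fun t : ℝ => ENNReal.ofReal |t| :=
    ENNReal.measurable_ofReal.comp measurable_abs
  rw [← h1, lintegral_map hf measurable_fst]

lemma lintegral_snd_abs (π : Measure (ℝ × ℝ)) (h2 : π.map Prod.snd = ν) :
    ∫⁻ z, ENNReal.ofReal |z.2| ∂π = ∫⁻ t, ENNReal.ofReal |t| ∂ν := by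
  have hf : Measurable fun t : ℝ => ENNReal.ofReal |t| :=
    ENNReal.measurable_ofReal.comp measurable_abs
  rw [← h2, lintegral_map hf measurable_snd]

lemma lintegral_abs_lt_top (hμ : Integrable (fun t => |t|) μ) :
    ∫⁻ t, ENNReal.ofReal |t| ∂μ < ⊤ := by
  have h := hμ.hasFiniteIntegral
  rw [HasFiniteIntegral] at h
  refine lt_of_le_of_lt (le_of_eq ?_) h
  refine lintegral_congr fun t => ?_
  rw [Real.enorm_eq_ofReal_abs, abs_abs]

lemma coupling_cost_lt_top (π : Measure (ℝ × ℝ))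
    (h1 : π.map Prod.fst = μ) (h2 : π.map Prod.snd = ν)
    (hμ : Integrable (fun t => |t|) μ) (hν : Integrable (fun t => |t|) ν) :
    ∫⁻ z, ENNReal.ofReal |z.1 - z.2| ∂π ≠ ⊤ := by
  have hb : ∫⁻ z, ENNReal.ofReal |z.1 - z.2| ∂π
      ≤ ∫⁻ z, (ENNReal.ofReal |z.1| + ENNReal.ofReal |z.2|) ∂π := by
    refine lintegral_mono fun z => ?_
    rw [← ENNReal.ofReal_add (abs_nonneg _) (abs_nonneg _)]
    exact ENNReal.ofReal_le_ofReal (abs_sub _ _)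
  have hf1 : Measurable fun z : ℝ × ℝ => ENNReal.ofReal |z.1| :=
    ENNReal.measurable_ofReal.comp measurable_fst.abs
  rw [lintegral_add_left hf1] at hb
  rw [lintegral_fst_abs π h1, lintegral_snd_abs π h2] at hb
  exact ne_top_of_le_ne_top
    (ENNReal.add_ne_top.2 ⟨(lintegral_abs_lt_top hμ).ne, (lintegral_abs_lt_top hν).ne⟩) hb

end Aux

theorem w11_eq_l1_cdf (μ ν : Measure ℝ) [IsProbabilityMeasure μ] [IsProbabilityMeasure ν]
    (hμ : Integrable (fun t => |t|) μ) (hν : Integrable (fun t => |t|) ν) :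
    Wcost (fun s t : ℝ => |s - t|) μ ν = ∫ x : ℝ, |cdf μ x - cdf ν x| := by
  classical
  set P := volume.restrict (Set.Ioo (0:ℝ) 1) with hPdef
  have hpair : AEMeasurable (fun u => (quantile μ u, quantile ν u)) P :=
    AEMeasurable.prodMk quantile_aemeasurable quantile_aemeasurable
  set π₀ := P.map (fun u => (quantile μ u, quantile ν u)) with hπ₀
  have habs : Measurable fun z : ℝ × ℝ => |z.1 - z.2| := (measurable_fst.sub measurable_snd).abs
  have hcdfm : Measurable fun x => |cdf μ x - cdf ν x| :=
    ((monotone_cdf μ).measurable.sub (monotone_cdf ν).measurable).abs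
  have hB : ∫ x, |cdf μ x - cdf ν x| = (∫⁻ x, ENNReal.ofReal |cdf μ x - cdf ν x|).toReal :=
    integral_eq_lintegral_of_nonneg_ae (Filter.Eventually.of_forall fun x => abs_nonneg _)
      hcdfm.aestronglyMeasurable
  have h1₀ : π₀.map Prod.fst = μ := by
    rw [hπ₀, AEMeasurable.map_map_of_aemeasurable measurable_fst.aemeasurable hpair]
    have he : (Prod.fst ∘ fun u => (quantile μ u, quantile ν u)) = quantile μ := rfl
    rw [he]; exact map_quantile
  have h2₀ : π₀.map Prod.snd = ν := by
    rw [hπ₀, AEMeasurable.map_map_of_aemeasurable measurable_snd.aemeasurable hpair]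
    have he : (Prod.snd ∘ fun u => (quantile μ u, quantile ν u)) = quantile ν := rfl
    rw [he]; exact map_quantile
  have hval : ∫ z, |z.1 - z.2| ∂π₀ = ∫ x, |cdf μ x - cdf ν x| := by
    rw [hB, integral_eq_lintegral_of_nonneg_ae
      (Filter.Eventually.of_forall fun z => abs_nonneg _) habs.aestronglyMeasurable]
    congr 1
    exact value_monotone_coupling
  have hmem : (∫ x, |cdf μ x - cdf ν x|) ∈ {r : ℝ | ∃ π : Measure (ℝ × ℝ),
      π.map Prod.fst = μ ∧ π.map Prod.snd = ν ∧ r = ∫ z, |z.1 - z.2| ∂π} :=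
    ⟨π₀, h1₀, h2₀, hval.symm⟩
  have hbdd : BddBelow {r : ℝ | ∃ π : Measure (ℝ × ℝ),
      π.map Prod.fst = μ ∧ π.map Prod.snd = ν ∧ r = ∫ z, |z.1 - z.2| ∂π} := by
    refine ⟨0, ?_⟩
    rintro r ⟨π, _, _, rfl⟩
    exact integral_nonneg fun z => abs_nonneg _
  have hlow : ∀ r ∈ {r : ℝ | ∃ π : Measure (ℝ × ℝ),
      π.map Prod.fst = μ ∧ π.map Prod.snd = ν ∧ r = ∫ z, |z.1 - z.2| ∂π},
      (∫ x, |cdf μ x - cdf ν x|) ≤ r := by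
    rintro r ⟨π, h1, h2, rfl⟩
    haveI : IsProbabilityMeasure π := coupling_isProb π h1
    rw [hB, integral_eq_lintegral_of_nonneg_ae
      (Filter.Eventually.of_forall fun z => abs_nonneg _) habs.aestronglyMeasurable]
    exact ENNReal.toReal_mono (coupling_cost_lt_top π h1 h2 hμ hν) (lower_bound π h1 h2)
  exact le_antisymm (csInf_le hbdd hmem) (le_csInf ⟨_, hmem⟩ hlow)
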